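/- If a graded element T of a ℤ²-boost-weight-graded algebra possesses the N-property (components of weight (b₁,b₂) vanish for b₁ > 0, for b₁ = 0 with b₂ > 0, and for (b₁,b₂) = (0,0)), then every full contraction of T with the boost-weight-(0,0) metric vanishes; in particular all scalar polynomial invariants built from T are zero. -/

import Mathlib

/-!
Order `ℤ × ℤ` lexicographically. The N-property says that every boost weight occurring in `T`
lies in the negative cone `{b | toLex b < 0}`. This cone is closed under addition and
multiplication adds weights, so every power `T ^ n` with `n ≥ 1` also has all its weights in the
cone. Since `(0, 0)` is not in it, the weight-`(0, 0)` component of `T ^ n` vanishes, and with it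
every full contraction.
-/

/-- The N-property for an element of a `ℤ²`-boost-weight-graded algebra:
all components of boost weight `(b₁, b₂)` vanish whenever `b₁ > 0`, when
`b₁ = 0` and `b₂ > 0`, and when `(b₁, b₂) = (0, 0)`. -/
def NProperty {R A : Type*} [CommRing R] [Ring A] [Algebra R A]
    (𝒜 : ℤ × ℤ → Submodule R A) [GradedRing 𝒜] (T : A) : Prop :=
  ∀ b : ℤ × ℤ, (0 < b.1 ∨ (b.1 = 0 ∧ 0 < b.2) ∨ b = (0, 0)) →
    GradedRing.proj 𝒜 b T = 0

namespace GradedRing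

variable {ι A σ : Type*} [DecidableEq ι] [AddMonoid ι] [Semiring A] [SetLike σ A]
  [AddSubmonoidClass σ A] (𝒜 : ι → σ) [GradedRing 𝒜] (S : AddSubsemigroup ι)

theorem mem_of_decompose_ne_zero {x : A} (hx : ∀ i ∉ S, proj 𝒜 i x = 0) {i : ι}
    (hi : DirectSum.decompose 𝒜 x i ≠ 0) : i ∈ S := by
  by_contra hiS
  apply hi
  rw [← ZeroMemClass.coe_eq_zero, ← proj_apply, hx i hiS]

theorem proj_mul_eq_zero_of_notMem {x y : A} (hx : ∀ i ∉ S, proj 𝒜 i x = 0)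
    (hy : ∀ i ∉ S, proj 𝒜 i y = 0) {n : ι} (hn : n ∉ S) : proj 𝒜 n (x * y) = 0 := by
  classical
  rw [proj_apply, DirectSum.decompose_mul, DirectSum.coe_mul_apply]
  refine Finset.sum_eq_zero fun ij hij => absurd ?_ hn
  obtain ⟨hsupp, rfl⟩ := Finset.mem_filter.mp hij
  obtain ⟨hi, hj⟩ := Finset.mem_product.mp hsupp
  exact S.add_mem (mem_of_decompose_ne_zero 𝒜 S hx (DFinsupp.mem_support_iff.mp hi))
    (mem_of_decompose_ne_zero 𝒜 S hy (DFinsupp.mem_support_iff.mp hj))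

theorem proj_pow_eq_zero_of_notMem {x : A} (hx : ∀ i ∉ S, proj 𝒜 i x = 0) {k : ℕ}
    (hk : k ≠ 0) : ∀ n ∉ S, proj 𝒜 n (x ^ k) = 0 := by
  induction k with
  | zero => exact absurd rfl hk
  | succ k ih =>
    rcases eq_or_ne k 0 with rfl | hk
    · simpa using hx
    · rw [pow_succ]
      exact fun n hn => proj_mul_eq_zero_of_notMem 𝒜 S (ih hk) hx hn

end GradedRing

def lexNegCone : AddSubsemigroup (ℤ × ℤ) where
  carrier := {b | toLex b < 0}
  add_mem' {a b} ha hb := show toLex (a + b) < 0 from add_neg ha hb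

theorem mem_lexNegCone {b : ℤ × ℤ} : b ∈ lexNegCone ↔ toLex b < 0 := .rfl

theorem NProperty.proj_eq_zero_of_notMem_lexNegCone {R A : Type*} [CommRing R] [Ring A]
    [Algebra R A] {𝒜 : ℤ × ℤ → Submodule R A} [GradedRing 𝒜] {T : A} (hT : NProperty 𝒜 T) :
    ∀ b ∉ lexNegCone, GradedRing.proj 𝒜 b T = 0 := by
  rintro ⟨b₁, b₂⟩ hb
  apply hT
  rw [mem_lexNegCone, ← toLex_zero, Prod.zero_eq_mk, Prod.Lex.toLex_lt_toLex] at hb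
  simp only [Prod.mk.injEq]
  omega

/-- Any full contraction (a linear functional depending only on the
boost-weight-`(0,0)` component, such as contraction with the weight-`(0,0)`
metric) of any power of an element with the N-property vanishes: all scalar
polynomial invariants built from `T` are zero. -/
theorem NProperty.contractions_vanish {R A : Type*} [CommRing R] [Ring A] [Algebra R A]
    (𝒜 : ℤ × ℤ → Submodule R A) [GradedRing 𝒜] (T : A)
    (hT : NProperty 𝒜 T)
    (tr : A →ₗ[R] R)
    (htr : ∀ a : A, GradedRing.proj 𝒜 (0, 0) a = 0 → tr a = 0) :
    ∀ n : ℕ, 1 ≤ n → tr (T ^ n) = 0 := fun n hn =>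
  htr _ <| GradedRing.proj_pow_eq_zero_of_notMem 𝒜 lexNegCone
    hT.proj_eq_zero_of_notMem_lexNegCone (by omega) _ (lt_irrefl (0 : ℤ ×ₗ ℤ))
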